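/- arXiv:1710.04016 — 3 statements merged into one kernel-verified Lean document; each statement's English description precedes it below -/
import Mathlib

section
/- Let ε > 0 and let s be a complex number with Re(s) > 0. Then 1 + ε s² ≠ 0, the complex number s²/(1 + ε s²) is not a nonpositive real number (i.e. it does not lie in (−∞, 0]), and the principal square root λ₊ = √(s²/(1 + ε s²)) satisfies Re(λ₊) > 0. -/
/-!
Since `s ↦ s²` maps the right half-plane into the slit plane `ℂ ∖ (-∞, 0]`, and the slit plane
is stable under `z ↦ z⁻¹` and under adding a nonnegative real, the identity
`s² / (1 + ε s²) = ((s⁻¹)² + ε)⁻¹` puts this quotient in the slit plane. There its argument lies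
in `(-π, π)`, so its principal square root has argument in `(-π/2, π/2)`.
-/

open Complex

namespace Complex

lemma sq_mem_slitPlane_of_re_pos {z : ℂ} (hz : 0 < z.re) : z ^ 2 ∈ slitPlane := by
  rw [mem_slitPlane_iff, sq, mul_re, mul_im]
  by_cases him : z.im = 0
  · left
    rw [him]
    nlinarith
  · right
    have : z.re * z.im ≠ 0 := mul_ne_zero hz.ne' him
    contrapose! this
    linarith

lemma inv_mem_slitPlane {z : ℂ} (hz : z ∈ slitPlane) : z⁻¹ ∈ slitPlane := by
  have hnormSq : 0 < normSq z := normSq_pos.2 (slitPlane_ne_zero hz)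
  rw [mem_slitPlane_iff] at hz ⊢
  rw [inv_re, inv_im]
  rcases hz with hre | him
  · exact Or.inl (div_pos hre hnormSq)
  · exact Or.inr (div_ne_zero (neg_ne_zero.2 him) hnormSq.ne')

lemma add_ofReal_mem_slitPlane {z : ℂ} (hz : z ∈ slitPlane) {x : ℝ} (hx : 0 ≤ x) :
    z + x ∈ slitPlane := by
  rw [mem_slitPlane_iff] at hz ⊢
  rw [add_re, add_im, ofReal_re, ofReal_im, add_zero]
  rcases hz with hre | him
  · exact Or.inl (by linarith)
  · exact Or.inr him

lemma re_cpow_pos_of_mem_slitPlane {z : ℂ} (hz : z ∈ slitPlane) {y : ℝ} (hy : |y| ≤ 1 / 2) :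
    0 < (z ^ (y : ℂ)).re := by
  rw [cpow_ofReal_re]
  have harg : |arg z| < Real.pi := lt_of_le_of_ne (abs_arg_le_pi z) fun h => by
    rcases abs_eq Real.pi_pos.le |>.1 h with h | h
    · exact slitPlane_arg_ne_pi hz h
    · exact (neg_pi_lt_arg z).ne' h
  have hcos : |arg z * y| < Real.pi / 2 := by
    rw [abs_mul]
    nlinarith [abs_nonneg (arg z), abs_nonneg y]
  exact mul_pos (Real.rpow_pos_of_pos (norm_pos_iff.2 (slitPlane_ne_zero hz)) y)
    (Real.cos_pos_of_mem_Ioo (abs_lt.1 hcos))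

lemma not_exists_nonpos_ofReal_eq_of_mem_slitPlane {z : ℂ} (hz : z ∈ slitPlane) :
    ¬ ∃ x : ℝ, x ≤ 0 ∧ (x : ℂ) = z := by
  rintro ⟨x, hx, rfl⟩
  exact mem_slitPlane_iff_not_le_zero.1 hz (by exact_mod_cast hx)

end Complex

lemma sq_div_one_add_mul_sq_eq {K : Type*} [Field K] {s : K} (hs : s ≠ 0) (c : K) :
    s ^ 2 / (1 + c * s ^ 2) = ((s⁻¹) ^ 2 + c)⁻¹ := by
  have hs2 : s ^ 2 ≠ 0 := pow_ne_zero 2 hs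
  rw [inv_pow, show (s ^ 2)⁻¹ + c = (s ^ 2)⁻¹ * (1 + c * s ^ 2) by field_simp, mul_inv, inv_inv,
    div_eq_mul_inv]

lemma sq_div_one_add_mul_sq_mem_slitPlane {ε : ℝ} (hε : 0 ≤ ε) {s : ℂ} (hs : 0 < s.re) :
    s ^ 2 / (1 + (ε : ℂ) * s ^ 2) ∈ slitPlane := by
  have hs0 : s ≠ 0 := fun h => by simp [h] at hs
  have hinv : 0 < (s⁻¹).re := by
    rw [inv_re]
    exact div_pos hs (normSq_pos.2 hs0)
  rw [sq_div_one_add_mul_sq_eq hs0]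
  exact inv_mem_slitPlane (add_ofReal_mem_slitPlane (sq_mem_slitPlane_of_re_pos hinv) hε)

/-- For `ε > 0` and `Re(s) > 0`: `1 + ε s² ≠ 0`, `s²/(1 + ε s²)` is not a nonpositive
real number, and the principal square root `λ₊ = √(s²/(1 + ε s²))` has `Re(λ₊) > 0`. -/
theorem stmt_5 (ε : ℝ) (hε : 0 < ε) (s : ℂ) (hs : 0 < s.re) :
    1 + (ε : ℂ) * s ^ 2 ≠ 0 ∧
    (¬ ∃ x : ℝ, x ≤ 0 ∧ (x : ℂ) = s ^ 2 / (1 + (ε : ℂ) * s ^ 2)) ∧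
    0 < ((s ^ 2 / (1 + (ε : ℂ) * s ^ 2)) ^ (1 / 2 : ℂ)).re := by
  have hw := sq_div_one_add_mul_sq_mem_slitPlane hε.le hs
  -- the quotient is nonzero, which excludes the junk value `s² / 0 = 0`
  refine ⟨(div_ne_zero_iff.1 (slitPlane_ne_zero hw)).2,
    not_exists_nonpos_ofReal_eq_of_mem_slitPlane hw, ?_⟩
  have half : (1 / 2 : ℂ) = ((1 / 2 : ℝ) : ℂ) := by norm_num
  rw [half]
  exact re_cpow_pos_of_mem_slitPlane hw (by norm_num)
end

section
/- Let ε > 0, δx > 0, δt > 0, let z be a complex number with |z| > 1, and set s = s(z) = (2/δt)·(z − 1)/(z + 1). Then the quadratic polynomial P(r) = (1 + ε s²) r² − 2(1 + s²(ε + δx²/2)) r + (1 + ε s²) has no root on the unit circle: there is no r ∈ ℂ with |r| = 1 and P(r) = 0. -/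
/-- The Crank–Nicolson symbol `s(z) = (2/δt)·(z-1)/(z+1)`. -/
noncomputable def sCN (δt : ℝ) (z : ℂ) : ℂ := (2 / (δt : ℂ)) * (z - 1) / (z + 1)

/-!
If `P(r) = a r² − 2 b r + a` vanishes at `r` with `|r| = 1`, multiplying by `r̄` gives
`a · Re r = b`. With `a = 1 + εs²` and `b = 1 + s²(ε + δx²/2)` this reads
`s² (ε (Re r − 1) − δx²/2) = 1 − Re r`, so `s²` is a nonpositive real number.
But the Cayley transform `z ↦ (z − 1)/(z + 1)` maps `|z| > 1` into the right half-plane,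
so `Re s > 0`, and no such `s` has a nonpositive real square.
-/

namespace Complex

open ComplexConjugate

theorem re_div_add_one_pos {z : ℂ} (hz : 1 < ‖z‖) : 0 < ((z - 1) / (z + 1)).re := by
  have hz1 : z + 1 ≠ 0 := by
    intro h
    rw [eq_neg_of_add_eq_zero_left h] at hz
    simp at hz
  have hre : ((z - 1) / (z + 1)).re = (normSq z - 1) / normSq (z + 1) := by
    rw [div_re, ← add_div]
    simp only [normSq_apply, sub_re, add_re, sub_im, add_im, one_re, one_im]
    ring
  have hnum : 0 < normSq z - 1 := by
    rw [← Complex.sq_norm]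
    nlinarith [norm_nonneg z]
  rw [hre]
  exact div_pos hnum (normSq_pos.mpr hz1)

theorem sq_ne_ofReal_of_re_pos {s : ℂ} (hs : 0 < s.re) {t : ℝ} (ht : t ≤ 0) :
    s ^ 2 ≠ t := by
  intro h
  have him : s.re * s.im = 0 := by
    have := congrArg im h
    simp only [sq, mul_im, ofReal_im] at this
    linarith
  have hre : s.re ^ 2 - s.im ^ 2 = t := by
    simpa [sq, mul_re] using congrArg re h
  have hsim : s.im = 0 := by
    simpa [hs.ne'] using him
  nlinarith

theorem mul_re_eq_of_palindromic_root {a b r : ℂ} (hr : ‖r‖ = 1)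
    (h : a * r ^ 2 - 2 * b * r + a = 0) : a * r.re = b := by
  have hconj : r * conj r = 1 := by
    rw [mul_conj, ← Complex.sq_norm, hr]
    norm_num
  have hsum : r + conj r = 2 * r.re := by
    rw [add_conj]
    push_cast
    ring
  linear_combination (conj r * h + (2 * b - a * r) * hconj - a * hsum) / 2

end Complex

theorem re_sCN_pos {δt : ℝ} (hδt : 0 < δt) {z : ℂ} (hz : 1 < ‖z‖) : 0 < (sCN δt z).re := by
  have h : sCN δt z = ((2 / δt : ℝ) : ℂ) * ((z - 1) / (z + 1)) := by
    rw [sCN]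
    push_cast
    ring
  rw [h, Complex.re_ofReal_mul]
  exact mul_pos (by positivity) (Complex.re_div_add_one_pos hz)

/-- For `|z| > 1`, the characteristic polynomial
`P(r) = (1 + εs²) r² − 2(1 + s²(ε + δx²/2)) r + (1 + εs²)` of the staggered-grid
Crank–Nicolson scheme, with `s = s(z)`, has no root on the unit circle. -/
theorem stmt_8 (ε δx δt : ℝ) (hε : 0 < ε) (hδx : 0 < δx) (hδt : 0 < δt)
    (z : ℂ) (hz : 1 < ‖z‖) :
    ¬ ∃ r : ℂ, ‖r‖ = 1 ∧
      (1 + (ε : ℂ) * (sCN δt z) ^ 2) * r ^ 2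
        - 2 * (1 + (sCN δt z) ^ 2 * ((ε : ℂ) + (δx : ℂ) ^ 2 / 2)) * r
        + (1 + (ε : ℂ) * (sCN δt z) ^ 2) = 0 := by
  rintro ⟨r, hr, hP⟩
  set s := sCN δt z
  set c := r.re
  have hc : c ≤ 1 := by
    simpa [hr] using Complex.re_le_norm r
  have hk : ε * (c - 1) - δx ^ 2 / 2 < 0 := by nlinarith
  have hreal : s ^ 2 * ((ε * (c - 1) - δx ^ 2 / 2 : ℝ) : ℂ) = ((1 - c : ℝ) : ℂ) := by
    push_cast
    linear_combination Complex.mul_re_eq_of_palindromic_root hr hP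
  have hs2 : s ^ 2 = (((1 - c) / (ε * (c - 1) - δx ^ 2 / 2) : ℝ) : ℂ) := by
    rw [Complex.ofReal_div, eq_div_iff (Complex.ofReal_ne_zero.mpr hk.ne), hreal]
  exact Complex.sq_ne_ofReal_of_re_pos (re_sCN_pos hδt hz)
    (div_nonpos_of_nonneg_of_nonpos (by linarith) hk.le) hs2
end

section
/- Let ε > 0 and let s be a fixed complex number with Re(s) > 0. For δx > 0 set P_{δx}(r) = r⁴ + 4εs² r³ − (2 + 4s²(δx² + 2ε)) r² + 4εs² r + 1. Then there exist constants C > 0 and δ₀ > 0 such that for every δx ∈ (0, δ₀), P_{δx} has roots r₁, r₂, r₃, r₄ satisfying: |r₂ − (1 + s δx / √(1 + εs²))| ≤ C δx², |r₃ − (1 − s δx / √(1 + εs²))| ≤ C δx², |r₁ − ( −(1 + 2εs²) − 2√(εs²(1 + εs²)) )| ≤ C δx², and |r₄ − ( −(1 + 2εs²) + 2√(εs²(1 + εs²)) )| ≤ C δx², where √ denotes the principal branch of the complex square root. -/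
/-!
With `a = εs²` and `D² = (1 + a)² + s²δx²`, the palindromic quartic factors as
`(r² - 2(D - a) r + 1) (r² + 2(D + a) r + 1)`, so its roots are `b ± w` with `w² = b² - 1`.
Of the two square roots of a number `z`, the one on the side of a given `w₀ ≠ 0` satisfies
`‖w - w₀‖ ≤ ‖z - w₀²‖ / ‖w₀‖`. For the two roots near `-(1 + 2a)` we compare with
`w₀ = 2√(a(1 + a))` and `z - w₀² = O(δx²)`; for the two roots near `1`, with
`w₀ = sδx/√(1 + a)`, the defect `z - w₀² = a (D - (1 + a))² / (1 + a)` is `O(δx⁴)`, which still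
gives `O(δx³)` after division by `‖w₀‖ ≍ δx`.
-/

open Complex ComplexConjugate

lemma norm_le_norm_add_of_re_mul_conj_nonneg {w w₀ : ℂ} (h : 0 ≤ (w * conj w₀).re) :
    ‖w₀‖ ≤ ‖w + w₀‖ := by
  have hsq : normSq w₀ ≤ normSq (w + w₀) := by
    rw [normSq_add]; nlinarith [normSq_nonneg w]
  rw [← sq_le_sq₀ (norm_nonneg _) (norm_nonneg _), ← normSq_eq_norm_sq, ← normSq_eq_norm_sq]
  exact hsq

lemma exists_sq_eq_norm_sub_le (z : ℂ) {w₀ : ℂ} (hw₀ : w₀ ≠ 0) :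
    ∃ w, w ^ 2 = z ∧ ‖w - w₀‖ ≤ ‖z - w₀ ^ 2‖ / ‖w₀‖ := by
  obtain ⟨u, rfl⟩ := IsAlgClosed.exists_eq_mul_self z
  obtain ⟨w, hwu, hw⟩ : ∃ w, w ^ 2 = u * u ∧ 0 ≤ (w * conj w₀).re := by
    by_cases h : 0 ≤ (u * conj w₀).re
    · exact ⟨u, by ring, h⟩
    · exact ⟨-u, by ring, by simp only [neg_mul, neg_re]; linarith⟩
  refine ⟨w, hwu, ?_⟩
  rw [le_div_iff₀ (norm_pos_iff.2 hw₀), ← hwu]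
  calc ‖w - w₀‖ * ‖w₀‖ ≤ ‖w - w₀‖ * ‖w + w₀‖ := by
        gcongr; exact norm_le_norm_add_of_re_mul_conj_nonneg hw
    _ = ‖w ^ 2 - w₀ ^ 2‖ := by rw [← norm_mul]; ring_nf

section

variable {a t D : ℂ}

lemma quartic_eq_prod_of_sq_eq {w v : ℂ} (hD : D ^ 2 = (1 + a) ^ 2 + t ^ 2)
    (hw : w ^ 2 = (D - a) ^ 2 - 1) (hv : v ^ 2 = (D + a) ^ 2 - 1) (r : ℂ) :
    r ^ 4 + 4 * a * r ^ 3 - (2 + 4 * t ^ 2 + 8 * a) * r ^ 2 + 4 * a * r + 1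
      = (r - (-(D + a) - v)) * (r - (D - a + w)) * (r - (D - a - w)) * (r - (-(D + a) + v)) := by
  linear_combination (4 * r ^ 2) * hD + ((r + D + a) ^ 2 - v ^ 2) * hw
    + (r ^ 2 - 2 * (D - a) * r + 1) * hv

lemma sub_sq_sub_one_sub_div_sq (hA : 1 + a ≠ 0) (hD : D ^ 2 = (1 + a) ^ 2 + t ^ 2) :
    (D - a) ^ 2 - 1 - (t / (1 + a) ^ (1 / 2 : ℂ)) ^ 2 = a * (D - (1 + a)) ^ 2 / (1 + a) := by
  rw [div_pow, one_div, cpow_ofNat_inv_pow]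
  field_simp
  linear_combination hD

lemma add_sq_sub_one_sub_sq :
    (D + a) ^ 2 - 1 - (2 * (a * (1 + a)) ^ (1 / 2 : ℂ)) ^ 2
      = (D - (1 + a)) * (D + (1 + a) + 2 * a) := by
  rw [mul_pow, one_div, cpow_ofNat_inv_pow]
  ring

lemma exists_sq_eq_sub_sq_sub_one_near (hA : 1 + a ≠ 0) (ht : t ≠ 0) (ht1 : ‖t‖ ≤ 1)
    (hD : D ^ 2 = (1 + a) ^ 2 + t ^ 2) (hDA : ‖D - (1 + a)‖ ≤ ‖t‖ ^ 2 / ‖1 + a‖) :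
    ∃ w, w ^ 2 = (D - a) ^ 2 - 1 ∧
      ‖w - t / (1 + a) ^ (1 / 2 : ℂ)‖ ≤ ‖a‖ * ‖(1 + a) ^ (1 / 2 : ℂ)‖ / ‖1 + a‖ ^ 3 * ‖t‖ ^ 2 := by
  have hsqrt : (1 + a) ^ (1 / 2 : ℂ) ≠ 0 := by simp [cpow_eq_zero_iff, hA]
  obtain ⟨w, hw, hnear⟩ := exists_sq_eq_norm_sub_le ((D - a) ^ 2 - 1) (div_ne_zero ht hsqrt)
  refine ⟨w, hw, hnear.trans ?_⟩
  rw [sub_sq_sub_one_sub_div_sq hA hD, norm_div, norm_div, norm_mul, norm_pow]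
  calc ‖a‖ * ‖D - (1 + a)‖ ^ 2 / ‖1 + a‖ / (‖t‖ / ‖(1 + a) ^ (1 / 2 : ℂ)‖)
      ≤ ‖a‖ * (‖t‖ ^ 2 / ‖1 + a‖) ^ 2 / ‖1 + a‖ / (‖t‖ / ‖(1 + a) ^ (1 / 2 : ℂ)‖) := by
        gcongr
    _ = ‖a‖ * ‖(1 + a) ^ (1 / 2 : ℂ)‖ / ‖1 + a‖ ^ 3 * (‖t‖ ^ 2 * ‖t‖) := by
        field_simp
    _ ≤ ‖a‖ * ‖(1 + a) ^ (1 / 2 : ℂ)‖ / ‖1 + a‖ ^ 3 * ‖t‖ ^ 2 := by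
        gcongr; exact mul_le_of_le_one_right (by positivity) ht1

lemma exists_sq_eq_add_sq_sub_one_near (ha : a ≠ 0) (hA : 1 + a ≠ 0) (ht1 : ‖t‖ ≤ 1)
    (hDA : ‖D - (1 + a)‖ ≤ ‖t‖ ^ 2 / ‖1 + a‖) :
    ∃ v, v ^ 2 = (D + a) ^ 2 - 1 ∧
      ‖v - 2 * (a * (1 + a)) ^ (1 / 2 : ℂ)‖
        ≤ (‖1 + a‖⁻¹ + 2 * ‖1 + a‖ + 2 * ‖a‖)
            / (‖1 + a‖ * ‖2 * (a * (1 + a)) ^ (1 / 2 : ℂ)‖) * ‖t‖ ^ 2 := by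
  have hv₀ : 2 * (a * (1 + a)) ^ (1 / 2 : ℂ) ≠ 0 := by simp [cpow_eq_zero_iff, ha, hA]
  obtain ⟨v, hv, hnear⟩ := exists_sq_eq_norm_sub_le ((D + a) ^ 2 - 1) hv₀
  refine ⟨v, hv, hnear.trans ?_⟩
  have hDA' : ‖D - (1 + a)‖ ≤ ‖1 + a‖⁻¹ := by
    refine hDA.trans ?_
    rw [div_eq_mul_inv]
    exact mul_le_of_le_one_left (by positivity) (pow_le_one₀ (norm_nonneg _) ht1)
  have hsum : ‖D + (1 + a) + 2 * a‖ ≤ ‖1 + a‖⁻¹ + 2 * ‖1 + a‖ + 2 * ‖a‖ := by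
    calc ‖D + (1 + a) + 2 * a‖ = ‖(D - (1 + a)) + 2 * (1 + a) + 2 * a‖ := by ring_nf
      _ ≤ ‖D - (1 + a)‖ + ‖2 * (1 + a)‖ + ‖2 * a‖ := norm_add₃_le
      _ ≤ _ := by simp only [norm_mul, Complex.norm_two]; linarith
  rw [add_sq_sub_one_sub_sq, norm_mul]
  calc ‖D - (1 + a)‖ * ‖D + (1 + a) + 2 * a‖ / ‖2 * (a * (1 + a)) ^ (1 / 2 : ℂ)‖
      ≤ ‖t‖ ^ 2 / ‖1 + a‖ * (‖1 + a‖⁻¹ + 2 * ‖1 + a‖ + 2 * ‖a‖)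
          / ‖2 * (a * (1 + a)) ^ (1 / 2 : ℂ)‖ := by gcongr
    _ = _ := by field_simp

theorem exists_quartic_roots_near (ha : a ≠ 0) (hA : 1 + a ≠ 0) :
    ∃ C > 0, ∀ t : ℂ, t ≠ 0 → ‖t‖ ≤ 1 → ∃ r1 r2 r3 r4 : ℂ,
      (∀ r, r ^ 4 + 4 * a * r ^ 3 - (2 + 4 * t ^ 2 + 8 * a) * r ^ 2 + 4 * a * r + 1
        = (r - r1) * (r - r2) * (r - r3) * (r - r4)) ∧
      ‖r2 - (1 + t / (1 + a) ^ (1 / 2 : ℂ))‖ ≤ C * ‖t‖ ^ 2 ∧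
      ‖r3 - (1 - t / (1 + a) ^ (1 / 2 : ℂ))‖ ≤ C * ‖t‖ ^ 2 ∧
      ‖r1 - (-(1 + 2 * a) - 2 * (a * (1 + a)) ^ (1 / 2 : ℂ))‖ ≤ C * ‖t‖ ^ 2 ∧
      ‖r4 - (-(1 + 2 * a) + 2 * (a * (1 + a)) ^ (1 / 2 : ℂ))‖ ≤ C * ‖t‖ ^ 2 := by
  set c₂ := ‖a‖ * ‖(1 + a) ^ (1 / 2 : ℂ)‖ / ‖1 + a‖ ^ 3
  set c₃ := (‖1 + a‖⁻¹ + 2 * ‖1 + a‖ + 2 * ‖a‖) / (‖1 + a‖ * ‖2 * (a * (1 + a)) ^ (1 / 2 : ℂ)‖)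
  refine ⟨‖1 + a‖⁻¹ + c₂ + c₃, by positivity, fun t ht ht1 => ?_⟩
  obtain ⟨D, hD, hDA⟩ := exists_sq_eq_norm_sub_le ((1 + a) ^ 2 + t ^ 2) hA
  rw [add_sub_cancel_left, norm_pow] at hDA
  obtain ⟨w, hw, hww⟩ := exists_sq_eq_sub_sq_sub_one_near hA ht ht1 hD hDA
  obtain ⟨v, hv, hvv⟩ := exists_sq_eq_add_sq_sub_one_near ha hA ht1 hDA
  have hDA' : ‖D - (1 + a)‖ ≤ ‖1 + a‖⁻¹ * ‖t‖ ^ 2 := by rwa [inv_mul_eq_div]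
  have hc₂ : 0 ≤ c₂ * ‖t‖ ^ 2 := by positivity
  have hc₃ : 0 ≤ c₃ * ‖t‖ ^ 2 := by positivity
  refine ⟨-(D + a) - v, D - a + w, D - a - w, -(D + a) + v,
    quartic_eq_prod_of_sq_eq hD hw hv, ?_, ?_, ?_, ?_⟩
  · calc _ = ‖(D - (1 + a)) + (w - t / (1 + a) ^ (1 / 2 : ℂ))‖ := by ring_nf
      _ ≤ _ := (norm_add_le _ _).trans (by linarith)
  · calc _ = ‖(D - (1 + a)) - (w - t / (1 + a) ^ (1 / 2 : ℂ))‖ := by ring_nf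
      _ ≤ _ := (norm_sub_le _ _).trans (by linarith)
  · calc _ = ‖(v - 2 * (a * (1 + a)) ^ (1 / 2 : ℂ)) + (D - (1 + a))‖ := by
          rw [← norm_neg]; ring_nf
      _ ≤ _ := (norm_add_le _ _).trans (by linarith)
  · calc _ = ‖(v - 2 * (a * (1 + a)) ^ (1 / 2 : ℂ)) - (D - (1 + a))‖ := by ring_nf
      _ ≤ _ := (norm_sub_le _ _).trans (by linarith)

end

lemma one_add_ofReal_mul_sq_ne_zero {ε : ℝ} (hε : 0 ≤ ε) {s : ℂ} (hs : 0 < s.re) :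
    1 + (ε : ℂ) * s ^ 2 ≠ 0 := by
  intro h
  have hre := congrArg re h
  have him := congrArg im h
  simp only [add_re, one_re, sq, mul_re, ofReal_re, ofReal_im, zero_re, add_im, one_im,
    mul_im, zero_im, zero_mul, sub_zero, zero_add] at hre him
  have him' : ε * s.im * (2 * s.re) = 0 := by linarith
  rcases mul_eq_zero.1 him' with h0 | h0
  · rcases mul_eq_zero.1 h0 with h1 | h1
    · simp [h1] at hre
    · rw [h1] at hre; nlinarith
  · linarith

/-- Asymptotic expansion, as `δx → 0`, of the four roots of the collocated-grid
characteristic quartic `P_{δx}(r) = r⁴ + 4εs² r³ − (2 + 4s²(δx² + 2ε)) r² + 4εs² r + 1`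
for a fixed `s` with `Re(s) > 0`. -/
theorem stmt_13 (ε : ℝ) (hε : 0 < ε) (s : ℂ) (hs : 0 < s.re) :
    ∃ C > (0 : ℝ), ∃ δ₀ > (0 : ℝ), ∀ δx : ℝ, 0 < δx → δx < δ₀ →
      ∃ r1 r2 r3 r4 : ℂ,
        (∀ r : ℂ,
          r ^ 4 + 4 * (ε : ℂ) * s ^ 2 * r ^ 3
            - (2 + 4 * s ^ 2 * ((δx : ℂ) ^ 2 + 2 * (ε : ℂ))) * r ^ 2
            + 4 * (ε : ℂ) * s ^ 2 * r + 1
          = (r - r1) * (r - r2) * (r - r3) * (r - r4)) ∧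
        norm (r2 - (1 + s * (δx : ℂ) / (1 + (ε : ℂ) * s ^ 2) ^ (1 / 2 : ℂ)))
          ≤ C * δx ^ 2 ∧
        norm (r3 - (1 - s * (δx : ℂ) / (1 + (ε : ℂ) * s ^ 2) ^ (1 / 2 : ℂ)))
          ≤ C * δx ^ 2 ∧
        norm (r1 - (-(1 + 2 * (ε : ℂ) * s ^ 2)
            - 2 * ((ε : ℂ) * s ^ 2 * (1 + (ε : ℂ) * s ^ 2)) ^ (1 / 2 : ℂ)))
          ≤ C * δx ^ 2 ∧
        norm (r4 - (-(1 + 2 * (ε : ℂ) * s ^ 2)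
            + 2 * ((ε : ℂ) * s ^ 2 * (1 + (ε : ℂ) * s ^ 2)) ^ (1 / 2 : ℂ)))
          ≤ C * δx ^ 2 := by
  have hs0 : s ≠ 0 := by rintro rfl; simp at hs
  have hspos : 0 < ‖s‖ := norm_pos_iff.2 hs0
  have ha : (ε : ℂ) * s ^ 2 ≠ 0 := mul_ne_zero (ofReal_ne_zero.2 hε.ne') (pow_ne_zero 2 hs0)
  obtain ⟨C, hC, hroots⟩ := exists_quartic_roots_near ha (one_add_ofReal_mul_sq_ne_zero hε.le hs)
  refine ⟨C * ‖s‖ ^ 2, by positivity, ‖s‖⁻¹, by positivity, fun δx hδ hδ₀ => ?_⟩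
  have hnorm : ‖s * (δx : ℂ)‖ = ‖s‖ * δx := by
    rw [norm_mul, norm_real, Real.norm_of_nonneg hδ.le]
  obtain ⟨r1, r2, r3, r4, hfac, h2, h3, h1, h4⟩ := hroots (s * δx)
    (mul_ne_zero hs0 (ofReal_ne_zero.2 hδ.ne'))
    (by rw [hnorm, ← le_div_iff₀' hspos, one_div]; exact hδ₀.le)
  rw [hnorm, mul_pow, ← mul_assoc] at h1 h2 h3 h4
  refine ⟨r1, r2, r3, r4, fun r => by rw [← hfac r]; ring, h2, h3, ?_, ?_⟩
  · simpa only [mul_assoc] using h1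
  · simpa only [mul_assoc] using h4
end
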